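/- Let k ≥ 3 and 4 ≤ D ≤ k be integers, let Ω be the soliton distribution with maximum degree D. Let s be an integer with 1 ≤ s such that 4 ≤ ⌈κ(s)⌉ ≤ D, and let n be an integer with n ≥ 68k. Then C(k,s)·e^{−nΣ_s} ≤ (s/k)^{2s}; in particular C(k,s)·e^{−nΣ_s} ≤ k^{−s} if s ≤ √k, and C(k,s)·e^{−nΣ_s} ≤ 2^{−2√k} if √k < s ≤ k/2. -/

import Mathlib

open Finset Real

/-- The soliton distribution with maximum degree `D`:
`Ω_1 = 1/D`, `Ω_d = 1/(d(d−1))` for `2 ≤ d ≤ D`, and `Ω_d = 0` otherwise. -/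
noncomputable def soliton (D d : ℕ) : ℝ :=
  if d = 1 then 1 / (D : ℝ)
  else if 2 ≤ d ∧ d ≤ D then 1 / ((d : ℝ) * ((d : ℝ) - 1))
  else 0

/-- `⌈κ(s)⌉` where `κ(s) = (k−s+1)/(2s+1)`. -/
noncomputable def kappaCeil (k s : ℕ) : ℕ := ⌈(((k : ℝ) - s + 1) / (2 * s + 1))⌉₊

/-- `Σ_s = (1/5)·Σ_{d=⌈κ(s)⌉}^{k−⌈κ(s)⌉} Ω_d
      + (2s/5)·( Σ_{d=1}^{⌈κ(s)⌉−1} d·Ω_d/(k−d+1)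
               + Σ_{d=k−⌈κ(s)⌉+1}^{k} (k−d)·Ω_d/(d+1) )`. -/
noncomputable def SigmaS (k : ℕ) (Ω : ℕ → ℝ) (s : ℕ) : ℝ :=
  (1 / 5) * (∑ d ∈ Finset.Icc (kappaCeil k s) (k - kappaCeil k s), Ω d) +
    (2 * s / 5) *
      ((∑ d ∈ Finset.Icc 1 (kappaCeil k s - 1), (d : ℝ) * Ω d / ((k : ℝ) - d + 1)) +
        ∑ d ∈ Finset.Icc (k - kappaCeil k s + 1) k, ((k : ℝ) - d) * Ω d / ((d : ℝ) + 1))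

/-! Only the terms `1 ≤ d < ⌈κ(s)⌉` of `Σ_s` are needed: there `d·Ω_d/(k-d+1) ≥ 1/((d-1)k)`,
and the harmonic sum gives `n·Σ_s ≥ (136/5)·s·log(⌈κ(s)⌉-1)`. As `k ≤ 3⌈κ(s)⌉s`, we have
`k/s ≤ (⌈κ(s)⌉-1)³`, so this exceeds `s + 3s·log(k/s)`, which together with
`C(k,s) ≤ (ek/s)^s` is exactly what `(s/k)^{2s}` requires. -/
lemma soliton_nonneg (D d : ℕ) : 0 ≤ soliton D d := by
  unfold soliton
  split_ifs with _ h
  · positivity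
  · have hd : (2 : ℝ) ≤ d := by exact_mod_cast h.1
    have : 0 < (d : ℝ) * (d - 1) := by nlinarith
    positivity
  · exact le_rfl

lemma soliton_of_two_le_of_le {D d : ℕ} (h2 : 2 ≤ d) (hD : d ≤ D) :
    soliton D d = 1 / ((d : ℝ) * ((d : ℝ) - 1)) := by
  rw [soliton, if_neg (by omega), if_pos ⟨h2, hD⟩]

lemma sum_Icc_two_inv_sub_one_eq_harmonic (m : ℕ) :
    ∑ d ∈ Icc 2 (m + 1), ((d : ℝ) - 1)⁻¹ = harmonic m := by
  induction m with
  | zero => simp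
  | succ m ih =>
    rw [sum_Icc_succ_top (by omega), ih, harmonic_succ]
    push_cast
    ring

lemma log_le_sum_Icc_two_inv_sub_one (m : ℕ) :
    Real.log m ≤ ∑ d ∈ Icc 2 m, ((d : ℝ) - 1)⁻¹ := by
  cases m with
  | zero => simp
  | succ m => simpa [sum_Icc_two_inv_sub_one_eq_harmonic] using log_add_one_le_harmonic m

lemma log_div_le_sum_Icc_mul_soliton {k D m : ℕ} (hmD : m ≤ D) (hmk : m ≤ k) :
    Real.log m / k ≤ ∑ d ∈ Icc 1 m, (d : ℝ) * soliton D d / ((k : ℝ) - d + 1) := by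
  have hterm : ∀ d ∈ Icc 2 m,
      ((d : ℝ) - 1)⁻¹ / k ≤ (d : ℝ) * soliton D d / ((k : ℝ) - d + 1) := by
    intro d hd
    rw [mem_Icc] at hd
    have hd2 : (2 : ℝ) ≤ d := by exact_mod_cast hd.1
    have hdk : (d : ℝ) ≤ k := by exact_mod_cast hd.2.trans hmk
    rw [soliton_of_two_le_of_le hd.1 (hd.2.trans hmD), mul_one_div,
      div_mul_cancel_left₀ (by positivity)]
    have : 0 < (d : ℝ) - 1 := by linarith
    gcongr
    linarith
  calc Real.log m / k ≤ ∑ d ∈ Icc 2 m, ((d : ℝ) - 1)⁻¹ / k := by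
        rw [← sum_div]
        gcongr
        exact log_le_sum_Icc_two_inv_sub_one m
    _ ≤ ∑ d ∈ Icc 2 m, (d : ℝ) * soliton D d / ((k : ℝ) - d + 1) := sum_le_sum hterm
    _ ≤ ∑ d ∈ Icc 1 m, (d : ℝ) * soliton D d / ((k : ℝ) - d + 1) := by
        refine sum_le_sum_of_subset_of_nonneg (Icc_subset_Icc one_le_two le_rfl) ?_
        intro d hd _
        rw [mem_Icc] at hd
        have hdk : (d : ℝ) ≤ k := by exact_mod_cast hd.2.trans hmk
        have := soliton_nonneg D d
        have : (0 : ℝ) < k - d + 1 := by linarith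
        positivity

lemma mul_sum_Icc_le_SigmaS {k s : ℕ} {Ω : ℕ → ℝ} (hΩ : ∀ d, 0 ≤ Ω d) :
    2 * s / 5 * ∑ d ∈ Icc 1 (kappaCeil k s - 1), (d : ℝ) * Ω d / ((k : ℝ) - d + 1) ≤
      SigmaS k Ω s := by
  have hcentral : 0 ≤ ∑ d ∈ Icc (kappaCeil k s) (k - kappaCeil k s), Ω d :=
    sum_nonneg fun d _ => hΩ d
  have htop :
      0 ≤ ∑ d ∈ Icc (k - kappaCeil k s + 1) k, ((k : ℝ) - d) * Ω d / ((d : ℝ) + 1) := by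
    refine sum_nonneg fun d hd => ?_
    have hdk : (d : ℝ) ≤ k := by exact_mod_cast (mem_Icc.mp hd).2
    have := hΩ d
    have : (0 : ℝ) ≤ k - d := by linarith
    positivity
  have hs : (0 : ℝ) ≤ 2 * s / 5 := by positivity
  rw [SigmaS]
  linarith [mul_nonneg hs htop]

lemma log_div_mul_le_SigmaS_soliton {k D s : ℕ} (hκD : kappaCeil k s ≤ D) (hDk : D ≤ k) :
    2 * s / 5 * (Real.log (kappaCeil k s - 1 : ℕ) / k) ≤ SigmaS k (soliton D) s :=
  (mul_sum_Icc_le_SigmaS (soliton_nonneg D)).trans' <|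
    mul_le_mul_of_nonneg_left (log_div_le_sum_Icc_mul_soliton (by omega) (by omega))
      (by positivity)

lemma le_three_mul_kappaCeil_mul {k s : ℕ} (hs : 1 ≤ s) (hκ : 1 ≤ kappaCeil k s) :
    k ≤ 3 * kappaCeil k s * s := by
  have hceil : ((k : ℝ) - s + 1) / (2 * s + 1) ≤ kappaCeil k s := Nat.le_ceil _
  rw [div_le_iff₀ (by positivity)] at hceil
  have hs' : (1 : ℝ) ≤ s := by exact_mod_cast hs
  have hκ' : (1 : ℝ) ≤ kappaCeil k s := by exact_mod_cast hκ
  have : (k : ℝ) ≤ 3 * kappaCeil k s * s := by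
    nlinarith [mul_nonneg (sub_nonneg.2 hκ') (sub_nonneg.2 hs')]
  exact_mod_cast this

lemma add_three_mul_log_div_le {k s m : ℕ} (hk : 0 < k) (hs : 0 < s) (hm : 3 ≤ m)
    (hkm : k ≤ m ^ 3 * s) :
    s + 3 * s * Real.log (k / s) ≤ 10 * s * Real.log m := by
  have hlogm : 1 ≤ Real.log m := by
    rw [le_log_iff_exp_le (by positivity)]
    have : (3 : ℝ) ≤ m := by exact_mod_cast hm
    linarith [exp_one_lt_d9]
  have hlogks : Real.log (k / s) ≤ 3 * Real.log m := by
    rw [show 3 * Real.log m = Real.log ((m : ℝ) ^ 3) by rw [Real.log_pow]; norm_num]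
    refine Real.log_le_log (by positivity) ?_
    rw [div_le_iff₀ (by positivity)]
    exact_mod_cast hkm
  have hs' : (0 : ℝ) ≤ s := s.cast_nonneg
  nlinarith [mul_le_mul_of_nonneg_left hlogm hs', mul_le_mul_of_nonneg_left hlogks hs']

lemma choose_le_div_pow_mul_exp (k s : ℕ) :
    (k.choose s : ℝ) ≤ ((k : ℝ) / s) ^ s * exp s := by
  have hss : (0 : ℝ) < (s : ℝ) ^ s := by exact_mod_cast Nat.pow_self_pos
  have hfac : (0 : ℝ) < s.factorial := by exact_mod_cast s.factorial_pos
  calc (k.choose s : ℝ) ≤ (k : ℝ) ^ s / s.factorial := Nat.choose_le_pow_div s k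
    _ ≤ (k : ℝ) ^ s * (exp s / (s : ℝ) ^ s) := by
        rw [div_eq_mul_inv]
        gcongr
        rw [inv_eq_one_div, div_le_div_iff₀ hfac hss, one_mul]
        exact (div_le_iff₀ hfac).1 (Real.pow_div_factorial_le_exp _ s.cast_nonneg s)
    _ = ((k : ℝ) / s) ^ s * exp s := by rw [div_pow]; ring

lemma choose_mul_exp_neg_le_div_pow {k s : ℕ} {x : ℝ} (hk : 0 < k) (hs : 0 < s)
    (hx : s + 3 * s * Real.log (k / s) ≤ x) :
    (k.choose s : ℝ) * exp (-x) ≤ ((s : ℝ) / k) ^ (2 * s) := by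
  have ht : (0 : ℝ) < k / s := by positivity
  have hlog : Real.log (s / k) = -Real.log (k / s) := by rw [← inv_div, Real.log_inv]
  calc (k.choose s : ℝ) * exp (-x) ≤ ((k : ℝ) / s) ^ s * exp s * exp (-x) := by
        gcongr
        exact choose_le_div_pow_mul_exp k s
    _ = exp (s * Real.log (k / s) + s - x) := by
        rw [exp_sub, exp_add, exp_nat_mul, exp_log ht, exp_neg]
        ring
    _ ≤ exp ((2 * s : ℕ) * Real.log (s / k)) := by
        rw [exp_le_exp, hlog]
        push_cast
        linarith
    _ = ((s : ℝ) / k) ^ (2 * s) := by rw [exp_nat_mul, exp_log (by positivity)]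

lemma div_pow_two_mul_le_inv_pow {k s : ℕ} (hsk : (s : ℝ) ≤ √k) :
    ((s : ℝ) / k) ^ (2 * s) ≤ ((k : ℝ) ^ s)⁻¹ := by
  have hsq : (s : ℝ) ^ 2 ≤ k := by
    simpa [sq_sqrt k.cast_nonneg] using pow_le_pow_left₀ s.cast_nonneg hsk 2
  rw [pow_mul, ← inv_pow]
  gcongr
  calc ((s : ℝ) / k) ^ 2 = (s : ℝ) ^ 2 / (k * k) := by rw [div_pow, sq (k : ℝ)]
    _ ≤ (k : ℝ) / (k * k) := by gcongr
    _ = (k : ℝ)⁻¹ := div_self_mul_self' _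

lemma div_pow_two_mul_le_two_rpow {k s : ℕ} (hsk : √k < s) (h2s : 2 * s ≤ k) :
    ((s : ℝ) / k) ^ (2 * s) ≤ (2 : ℝ) ^ (-2 * √k) := by
  have hk : (0 : ℝ) < k := by
    have := (sqrt_nonneg (k : ℝ)).trans_lt hsk
    have : (2 * s : ℝ) ≤ k := by exact_mod_cast h2s
    linarith
  have hhalf : (s : ℝ) / k ≤ 2⁻¹ := by
    rw [div_le_iff₀ hk]
    have : (2 * s : ℝ) ≤ k := by exact_mod_cast h2s
    linarith
  calc ((s : ℝ) / k) ^ (2 * s) ≤ (2⁻¹ : ℝ) ^ (2 * s) := by gcongr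
    _ = (2 : ℝ) ^ (-2 * (s : ℝ)) := by
        rw [inv_pow, ← rpow_natCast, ← rpow_neg zero_le_two]
        push_cast
        ring_nf
    _ ≤ (2 : ℝ) ^ (-2 * √k) := rpow_le_rpow_of_exponent_le one_le_two (by linarith)

theorem stmt4_general (k D : ℕ) (hDk : D ≤ k)
    (s : ℕ) (hs1 : 1 ≤ s) (hκ4 : 4 ≤ kappaCeil k s) (hκD : kappaCeil k s ≤ D)
    (n : ℕ) (hn : 68 * k ≤ n) :
    (k.choose s : ℝ) * Real.exp (-(n : ℝ) * SigmaS k (soliton D) s) ≤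
        ((s : ℝ) / k) ^ (2 * s) ∧
    ((s : ℝ) ≤ Real.sqrt k →
      (k.choose s : ℝ) * Real.exp (-(n : ℝ) * SigmaS k (soliton D) s) ≤ ((k : ℝ) ^ s)⁻¹) ∧
    (Real.sqrt k < (s : ℝ) → 2 * s ≤ k →
      (k.choose s : ℝ) * Real.exp (-(n : ℝ) * SigmaS k (soliton D) s) ≤
        (2 : ℝ) ^ (-2 * Real.sqrt k)) := by
  set κ := kappaCeil k s
  have hk : 0 < k := by omega
  have hkm : k ≤ (κ - 1) ^ 3 * s := by
    have hκ : 3 * κ ≤ (κ - 1) ^ 3 := by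
      obtain ⟨m, hm⟩ : ∃ m, κ = m + 4 := ⟨κ - 4, by omega⟩
      rw [hm, show m + 4 - 1 = m + 3 by omega]
      ring_nf
      nlinarith [Nat.zero_le (m ^ 2), Nat.zero_le (m ^ 3)]
    calc k ≤ 3 * κ * s := le_three_mul_kappaCeil_mul hs1 (by omega)
      _ ≤ (κ - 1) ^ 3 * s := Nat.mul_le_mul_right s hκ
  have hexponent : s + 3 * s * Real.log (k / s) ≤ n * SigmaS k (soliton D) s := by
    have hlog : 0 ≤ Real.log (κ - 1 : ℕ) := Real.log_natCast_nonneg _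
    have hnk : 68 * (k : ℝ) ≤ n := by exact_mod_cast hn
    calc s + 3 * s * Real.log (k / s) ≤ 10 * s * Real.log (κ - 1 : ℕ) :=
          add_three_mul_log_div_le hk hs1 (by omega) hkm
      _ ≤ 68 * k * (2 * s / 5 * (Real.log (κ - 1 : ℕ) / k)) := by
          field_simp
          nlinarith
      _ ≤ n * SigmaS k (soliton D) s := by
          gcongr
          exact log_div_mul_le_SigmaS_soliton hκD hDk
  have hmain := choose_mul_exp_neg_le_div_pow hk hs1 hexponent
  rw [neg_mul]
  exact ⟨hmain, fun hsk => hmain.trans (div_pow_two_mul_le_inv_pow hsk),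
    fun hsk h2s => hmain.trans (div_pow_two_mul_le_two_rpow hsk h2s)⟩

theorem stmt4 (k D : ℕ) (hk : 3 ≤ k) (hD4 : 4 ≤ D) (hDk : D ≤ k)
    (s : ℕ) (hs1 : 1 ≤ s) (hκ4 : 4 ≤ kappaCeil k s) (hκD : kappaCeil k s ≤ D)
    (n : ℕ) (hn : 68 * k ≤ n) :
    (k.choose s : ℝ) * Real.exp (-(n : ℝ) * SigmaS k (soliton D) s) ≤
        ((s : ℝ) / k) ^ (2 * s) ∧
    ((s : ℝ) ≤ Real.sqrt k →
      (k.choose s : ℝ) * Real.exp (-(n : ℝ) * SigmaS k (soliton D) s) ≤ ((k : ℝ) ^ s)⁻¹) ∧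
    (Real.sqrt k < (s : ℝ) → 2 * s ≤ k →
      (k.choose s : ℝ) * Real.exp (-(n : ℝ) * SigmaS k (soliton D) s) ≤
        (2 : ℝ) ^ (-2 * Real.sqrt k)) :=
  stmt4_general k D hDk s hs1 hκ4 hκD n hn
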